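/- The formula Ξ^T defines the complement of the set of ≼-predecessors of T: for generalized causal teams S and T with T nonempty and |T/≈| = k+1, S ⊨ Ξ^T if and only if T ⋠ S, where Ξ^T := χ_k ∨ Θ^{complement of T⁻} ∨ ⋁{Θ^{{s}} ∧ Φ^F : s ∈ T⁻, F ∈ 𝔽_σ, {(s,F)} ⋠ T}. -/

import Mathlib

namespace CausalTeams

attribute [local instance] Classical.propDecidable

/-- A system of functions over a signature: each endogenous variable `V ∈ En` has a set
of parents `PA V` (not containing `V`) and a function computing its value, which depends
only on the values of its parents. -/
structure FuncSystem (Var : Type) (Val : Var → Type) : Type where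
  En : Set Var
  PA : Var → Set Var
  pa_ne : ∀ V, V ∉ PA V
  fn : ∀ V, (∀ W, Val W) → Val V
  dep_only : ∀ V (s t : ∀ W, Val W), (∀ W ∈ PA V, s W = t W) → fn V s = fn V t

variable {Var : Type} {Val : Var → Type}

/-- Assignments of values to the variables. -/
abbrev Assign (Var : Type) (Val : Var → Type) : Type := ∀ V, Val V

/-- An assignment is compatible with a system of functions if each endogenous variable's
value is the one generated by its function. -/
def Compat (s : Assign Var Val) (F : FuncSystem Var Val) : Prop :=
  ∀ V ∈ F.En, s V = F.fn V s

/-- The endogenous variables whose generating function is constant. -/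
def Cn (F : FuncSystem Var Val) : Set Var :=
  {V | V ∈ F.En ∧ ∀ s t : Assign Var Val, F.fn V s = F.fn V t}

/-- The functions for `V` in `F` and `G` are equivalent up to dummy arguments: they agree
whenever their arguments agree on the common parents of `V`. -/
def fnEquiv (F G : FuncSystem Var Val) (V : Var) : Prop :=
  ∀ s t : Assign Var Val,
    (∀ W, W ∈ F.PA V → W ∈ G.PA V → s W = t W) → F.fn V s = G.fn V t

/-- Equivalence of systems of functions up to dummy arguments. -/
def sysEquiv (F G : FuncSystem Var Val) : Prop :=
  F.En \ Cn F = G.En \ Cn G ∧ ∀ V ∈ F.En \ Cn F, fnEquiv F G V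

/-- The edge relation of the causal graph of `F`. -/
def Edge (F : FuncSystem Var Val) (W V : Var) : Prop := V ∈ F.En ∧ W ∈ F.PA V

/-- `F` is recursive: its causal graph is acyclic. -/
def RecursiveSys (F : FuncSystem Var Val) : Prop :=
  ∀ V, ¬ Relation.TransGen (Edge F) V V

/-- The system of functions resulting from the intervention `do(X = x)`: the variables of
`X` are made exogenous; parents and functions of the remaining endogenous variables are kept. -/
def restrictSys (F : FuncSystem Var Val) (X : Finset Var) : FuncSystem Var Val where
  En := F.En \ ↑X
  PA := F.PA
  pa_ne := F.pa_ne
  fn := F.fn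
  dep_only := F.dep_only

section InterveneAssign
variable [DecidableEq Var] [Fintype Var]

/-- One step of recomputation after the intervention `do(X = x)`. -/
noncomputable def stepFn (F : FuncSystem Var Val) (X : Finset Var) (x : Assign Var Val)
    (s : Assign Var Val) : Assign Var Val :=
  fun V => if V ∈ X then x V else if V ∈ F.En then F.fn V s else s V

/-- The result of the intervention `do(X = x)` on the assignment `s`
(for recursive systems, iterating the recomputation step sufficiently many times
reaches the fixed point). -/
noncomputable def interveneAssign (F : FuncSystem Var Val) (X : Finset Var) (x : Assign Var Val)
    (s : Assign Var Val) : Assign Var Val :=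
  (stepFn F X x)^[Fintype.card Var + 1] s

end InterveneAssign

/-- Formulas: equality atoms `V = v`, dependence atoms `=(Xs; Y)`, negation, conjunction,
tensor disjunction, global disjunction, and interventionist counterfactuals
`X = x □→ φ` (the antecedent is a finite set of variables together with the values
imposed on them, read off from an assignment; such antecedents are always consistent). -/
inductive Formula (Var : Type) (Val : Var → Type) : Type where
  | eq : (V : Var) → Val V → Formula Var Val
  | dep : List Var → Var → Formula Var Val
  | neg : Formula Var Val → Formula Var Val
  | and : Formula Var Val → Formula Var Val → Formula Var Val
  | or : Formula Var Val → Formula Var Val → Formula Var Val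
  | gor : Formula Var Val → Formula Var Val → Formula Var Val
  | cf : Finset Var → Assign Var Val → Formula Var Val → Formula Var Val

/-- CO-formulas: no dependence atoms, no global disjunction. -/
def IsCO : Formula Var Val → Prop
  | .eq _ _ => True
  | .dep _ _ => False
  | .neg φ => IsCO φ
  | .and φ ψ => IsCO φ ∧ IsCO ψ
  | .or φ ψ => IsCO φ ∧ IsCO ψ
  | .gor _ _ => False
  | .cf _ _ φ => IsCO φ

/-- COD-formulas: CO plus dependence atoms; negation applies only to CO-formulas. -/
def IsCOD : Formula Var Val → Prop
  | .eq _ _ => True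
  | .dep _ _ => True
  | .neg φ => IsCO φ
  | .and φ ψ => IsCOD φ ∧ IsCOD ψ
  | .or φ ψ => IsCOD φ ∧ IsCOD ψ
  | .gor _ _ => False
  | .cf _ _ φ => IsCOD φ

/-- CO_⤘-formulas: CO plus global disjunction; negation applies only to CO-formulas. -/
def IsCOglobal : Formula Var Val → Prop
  | .eq _ _ => True
  | .dep _ _ => False
  | .neg φ => IsCO φ
  | .and φ ψ => IsCOglobal φ ∧ IsCOglobal ψ
  | .or φ ψ => IsCOglobal φ ∧ IsCOglobal ψ
  | .gor φ ψ => IsCOglobal φ ∧ IsCOglobal ψ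
  | .cf _ _ φ => IsCOglobal φ

/-- Counterfactual-free formulas: no occurrence of `□→`. -/
def CFFree : Formula Var Val → Prop
  | .eq _ _ => True
  | .dep _ _ => True
  | .neg φ => CFFree φ
  | .and φ ψ => CFFree φ ∧ CFFree ψ
  | .or φ ψ => CFFree φ ∧ CFFree ψ
  | .gor φ ψ => CFFree φ ∧ CFFree ψ
  | .cf _ _ _ => False

section Semantics
variable [DecidableEq Var] [Fintype Var]

/-- Causal team semantics: satisfaction of a formula by a team of assignments together
with a system of functions. -/
noncomputable def csat : FuncSystem Var Val → Set (Assign Var Val) → Formula Var Val → Prop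
  | _, T, .eq V v => ∀ s ∈ T, s V = v
  | _, T, .dep Xs Y => ∀ s ∈ T, ∀ t ∈ T, (∀ W ∈ Xs, s W = t W) → s Y = t Y
  | F, T, .neg φ => ∀ s ∈ T, ¬ csat F {s} φ
  | F, T, .and φ ψ => csat F T φ ∧ csat F T ψ
  | F, T, .or φ ψ => ∃ T₁ T₂, T₁ ∪ T₂ = T ∧ csat F T₁ φ ∧ csat F T₂ ψ
  | F, T, .gor φ ψ => csat F T φ ∨ csat F T ψ
  | F, T, .cf X x φ => csat (restrictSys F X) (interveneAssign F X x '' T) φ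

end Semantics

/-- Generalized causal teams: sets of pairs of an assignment and a system of functions. -/
abbrev GCT (Var : Type) (Val : Var → Type) : Type :=
  Set (Assign Var Val × FuncSystem Var Val)

/-- The team component of a generalized causal team. -/
def teamOf (T : GCT Var Val) : Set (Assign Var Val) := Prod.fst '' T

/-- A genuine (recursive) generalized causal team: all pairs are compatible and all
function components are recursive. -/
def IsGCT (T : GCT Var Val) : Prop := ∀ p ∈ T, Compat p.1 p.2 ∧ RecursiveSys p.2

section GSemantics
variable [DecidableEq Var] [Fintype Var]

/-- Pointwise intervention on a generalized causal team. -/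
noncomputable def gIntervene (T : GCT Var Val) (X : Finset Var) (x : Assign Var Val) : GCT Var Val :=
  (fun p => (interveneAssign p.2 X x p.1, restrictSys p.2 X)) '' T

/-- Generalized causal team semantics. -/
noncomputable def gsat : GCT Var Val → Formula Var Val → Prop
  | T, .eq V v => ∀ p ∈ T, p.1 V = v
  | T, .dep Xs Y => ∀ p ∈ T, ∀ q ∈ T, (∀ W ∈ Xs, p.1 W = q.1 W) → p.1 Y = q.1 Y
  | T, .neg φ => ∀ p ∈ T, ¬ gsat {p} φ
  | T, .and φ ψ => gsat T φ ∧ gsat T ψ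
  | T, .or φ ψ => ∃ T₁ T₂, T₁ ∪ T₂ = T ∧ gsat T₁ φ ∧ gsat T₂ ψ
  | T, .gor φ ψ => gsat T φ ∨ gsat T ψ
  | T, .cf X x φ => gsat (gIntervene T X x) φ

end GSemantics

/-- Equivalence of generalized causal teams: for each system of functions `F`, the
assignments occurring together with a function component `∼`-similar to `F` are the same. -/
def gctEquiv (S T : GCT Var Val) : Prop :=
  ∀ F : FuncSystem Var Val,
    {s | ∃ G, (s, G) ∈ S ∧ sysEquiv G F} = {s | ∃ G, (s, G) ∈ T ∧ sysEquiv G F}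

/-- `S ≼ T` iff `S ≈ R ⊆ T` for some `R`. -/
def sle (S T : GCT Var Val) : Prop := ∃ R : GCT Var Val, gctEquiv S R ∧ R ⊆ T

/-- The generalized causal team generated by a causal team. -/
def toGCT (team : Set (Assign Var Val)) (F : FuncSystem Var Val) : GCT Var Val :=
  (fun s => (s, F)) '' team

/-- Equivalence of elements of generalized causal teams: same assignment and
`∼`-similar function components. -/
def pairEquiv (p q : Assign Var Val × FuncSystem Var Val) : Prop :=
  p.1 = q.1 ∧ sysEquiv p.2 q.2

/-- The quotient `T/≈` has at most `k` elements: `T` is covered by `k` representatives. -/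
def quotCardLE (T : GCT Var Val) (k : ℕ) : Prop :=
  ∃ R : Finset (Assign Var Val × FuncSystem Var Val),
    R.card ≤ k ∧ ∀ p ∈ T, ∃ q ∈ R, pairEquiv p q

section Entailment
variable [DecidableEq Var] [Fintype Var]

/-- Entailment over (recursive) generalized causal teams. -/
def gEntails (Δ : Set (Formula Var Val)) (α : Formula Var Val) : Prop :=
  ∀ T : GCT Var Val, IsGCT T → (∀ γ ∈ Δ, gsat T γ) → gsat T α

/-- Entailment over (recursive) causal teams. -/
def cEntails (Δ : Set (Formula Var Val)) (α : Formula Var Val) : Prop :=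
  ∀ (F : FuncSystem Var Val) (team : Set (Assign Var Val)),
    RecursiveSys F → (∀ s ∈ team, Compat s F) →
    (∀ γ ∈ Δ, csat F team γ) → csat F team α

/-- Causal incompatibility of two formulas. -/
def Incompatible (φ ψ : Formula Var Val) : Prop :=
  ∀ (F G : FuncSystem Var Val) (S T : Set (Assign Var Val)),
    S.Nonempty → T.Nonempty → RecursiveSys F → RecursiveSys G →
    (∀ s ∈ S, Compat s F) → (∀ t ∈ T, Compat t G) →
    csat F S φ → csat G T ψ → ¬ sysEquiv F G

end Entailment

section FormulaHelpers
variable [DecidableEq Var] [Fintype Var] [Nonempty Var]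
  [∀ V, Fintype (Val V)] [∀ V, Nonempty (Val V)]

/-- The falsum formula `⊥ := V = v ∧ V ≠ v`. -/
noncomputable def falsum : Formula Var Val :=
  let V := Classical.arbitrary Var
  Formula.and (Formula.eq V (Classical.arbitrary (Val V)))
    (Formula.neg (Formula.eq V (Classical.arbitrary (Val V))))

/-- Finite conjunction (the empty conjunction is `¬⊥`). -/
noncomputable def bigAnd : List (Formula Var Val) → Formula Var Val
  | [] => Formula.neg falsum
  | [φ] => φ
  | φ :: l => Formula.and φ (bigAnd l)

/-- Finite tensor disjunction (the empty disjunction is `⊥`). -/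
noncomputable def bigOr : List (Formula Var Val) → Formula Var Val
  | [] => falsum
  | [φ] => φ
  | φ :: l => Formula.or φ (bigOr l)

/-- Finite global disjunction (the empty disjunction is `⊥`). -/
noncomputable def bigGor : List (Formula Var Val) → Formula Var Val
  | [] => falsum
  | [φ] => φ
  | φ :: l => Formula.gor φ (bigGor l)

/-- The conjunction `⋀_{V ∈ Dom} V = s(V)` describing the assignment `s`. -/
noncomputable def eqConj (s : Assign Var Val) : Formula Var Val :=
  bigAnd ((Finset.univ : Finset Var).toList.map fun V => Formula.eq V (s V))

/-- `Θ^A := ⋁_{s ∈ A} ⋀_{V ∈ Dom} V = s(V)`. -/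
noncomputable def Theta (A : Finset (Assign Var Val)) : Formula Var Val :=
  bigOr (A.toList.map eqConj)

/-- The constancy atom `=(V)`. -/
def conAtom (V : Var) : Formula Var Val := Formula.dep [] V

/-- `μ := ⋀_{V ∈ Dom} ⋀_{w} (W_V = w □→ =(V))` where `W_V = Dom \ {V}`. -/
noncomputable def muForm : Formula Var Val :=
  bigAnd ((Finset.univ : Finset Var).toList.map fun V =>
    bigAnd (((Finset.univ : Finset (Assign Var Val))).toList.map fun w =>
      Formula.cf ((Finset.univ : Finset Var).erase V) w (conAtom V)))

/-- `χ := μ ∧ ⋀_{V ∈ Dom} =(V)`. -/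
noncomputable def chiForm : Formula Var Val :=
  Formula.and muForm (bigAnd ((Finset.univ : Finset Var).toList.map conAtom))

/-- `χ_k`: the `k`-fold tensor disjunction of `χ` (with `χ_0 := ⊥`). -/
noncomputable def chiK : ℕ → Formula Var Val
  | 0 => falsum
  | 1 => chiForm
  | n + 2 => Formula.or chiForm (chiK (n + 1))

end FormulaHelpers

/-! The formula `χ` holds in a team exactly when all its elements are `≈`-equivalent: its
constancy atoms fix the assignment, and `μ` forces the function components to agree under every
intervention on all variables but one, which for compatible pairs over a common assignment is
`∼`-equivalence. Hence `χ_k` expresses `|S/≈| ≤ k`.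

`T ⋠ S` means that some `(t, G) ∈ T` has no `≈`-copy in `S`. Given such a pair, split `S` into
the elements with a copy in `T` (they avoid the class of `(t, G)`, so they fall into at most `k`
classes), the elements whose assignment lies outside `T⁻`, and the rest, each of which is `≈` a
pair of the big disjunction. Conversely, if `T ≼ S`, every copy of an element of `T` must lie in
the `χ_k` part of any split of `S`, forcing `|T/≈| ≤ k`. -/

section Equivalence

lemma sysEquiv_refl (F : FuncSystem Var Val) : sysEquiv F F :=
  ⟨rfl, fun V _ s t h => F.dep_only V s t fun W hW => h W hW hW⟩

lemma sysEquiv_symm {F G : FuncSystem Var Val} (h : sysEquiv F G) : sysEquiv G F := by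
  refine ⟨h.1.symm, fun V hV s t hst => ?_⟩
  exact (h.2 V (h.1 ▸ hV) t s fun W hF hG => (hst W hG hF).symm).symm

lemma sysEquiv_trans {F G H : FuncSystem Var Val} (hFG : sysEquiv F G) (hGH : sysEquiv G H) :
    sysEquiv F H := by
  refine ⟨hFG.1.trans hGH.1, fun V hV s t hst => ?_⟩
  -- `r` agrees with `s` on the parents in `F` and with `t` on the parents in `H`.
  let r : Assign Var Val := fun W => if W ∈ F.PA V then s W else t W
  calc F.fn V s = G.fn V r := hFG.2 V hV s r fun W hF _ => by simp [r, hF]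
    _ = H.fn V t := hGH.2 V (hFG.1 ▸ hV) r t fun W _ hH => by
        by_cases hF : W ∈ F.PA V
        · simpa [r, hF] using hst W hF hH
        · simp [r, hF]

lemma pairEquiv_refl (p : Assign Var Val × FuncSystem Var Val) : pairEquiv p p :=
  ⟨rfl, sysEquiv_refl _⟩

lemma pairEquiv_symm {p q : Assign Var Val × FuncSystem Var Val} (h : pairEquiv p q) :
    pairEquiv q p :=
  ⟨h.1.symm, sysEquiv_symm h.2⟩

lemma pairEquiv_trans {p q r : Assign Var Val × FuncSystem Var Val}
    (hpq : pairEquiv p q) (hqr : pairEquiv q r) : pairEquiv p r :=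
  ⟨hpq.1.trans hqr.1, sysEquiv_trans hpq.2 hqr.2⟩

lemma setOf_sysEquiv_subset_iff {A B : GCT Var Val} :
    (∀ F : FuncSystem Var Val,
      {s | ∃ G, (s, G) ∈ A ∧ sysEquiv G F} ⊆ {s | ∃ G, (s, G) ∈ B ∧ sysEquiv G F}) ↔
    ∀ p ∈ A, ∃ q ∈ B, pairEquiv p q := by
  constructor
  · intro h p hp
    obtain ⟨G, hG, hGp⟩ := h p.2 ⟨p.2, hp, sysEquiv_refl _⟩
    exact ⟨(p.1, G), hG, rfl, sysEquiv_symm hGp⟩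
  · rintro h F s ⟨G, hG, hGF⟩
    obtain ⟨⟨t, H⟩, hH, rfl, hGH⟩ := h (s, G) hG
    exact ⟨H, hH, sysEquiv_trans (sysEquiv_symm hGH) hGF⟩

lemma gctEquiv_iff {A B : GCT Var Val} :
    gctEquiv A B ↔
      (∀ p ∈ A, ∃ q ∈ B, pairEquiv p q) ∧ ∀ q ∈ B, ∃ p ∈ A, pairEquiv q p := by
  simp only [gctEquiv, Set.Subset.antisymm_iff, forall_and, setOf_sysEquiv_subset_iff]

lemma sle_iff_forall_exists_pairEquiv {S T : GCT Var Val} :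
    sle S T ↔ ∀ p ∈ S, ∃ q ∈ T, pairEquiv p q := by
  constructor
  · rintro ⟨R, hSR, hRT⟩ p hp
    obtain ⟨q, hq, hpq⟩ := (gctEquiv_iff.1 hSR).1 p hp
    exact ⟨q, hRT hq, hpq⟩
  · intro h
    refine ⟨{q ∈ T | ∃ p ∈ S, pairEquiv q p}, gctEquiv_iff.2 ⟨?_, fun q hq => hq.2⟩,
      fun q hq => hq.1⟩
    intro p hp
    obtain ⟨q, hq, hpq⟩ := h p hp
    exact ⟨q, ⟨hq, p, hp, pairEquiv_symm hpq⟩, hpq⟩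

lemma singleton_sle_iff {p : Assign Var Val × FuncSystem Var Val} {T : GCT Var Val} :
    sle {p} T ↔ ∃ q ∈ T, pairEquiv p q := by
  simp [sle_iff_forall_exists_pairEquiv]

end Equivalence

section QuotCard

lemma quotCardLE.of_forall_exists {A B : GCT Var Val} {k : ℕ} (hB : quotCardLE B k)
    (hAB : ∀ p ∈ A, ∃ q ∈ B, pairEquiv p q) : quotCardLE A k := by
  obtain ⟨R, hR, hcov⟩ := hB
  refine ⟨R, hR, fun p hp => ?_⟩
  obtain ⟨q, hq, hpq⟩ := hAB p hp
  obtain ⟨r, hr, hqr⟩ := hcov q hq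
  exact ⟨r, hr, pairEquiv_trans hpq hqr⟩

lemma quotCardLE.of_avoid {A B : GCT Var Val} {k : ℕ} (hB : quotCardLE B (k + 1))
    {p₀ : Assign Var Val × FuncSystem Var Val} (hp₀ : p₀ ∈ B)
    (hAB : ∀ p ∈ A, ∃ q ∈ B, pairEquiv p q) (havoid : ∀ p ∈ A, ¬ pairEquiv p p₀) :
    quotCardLE A k := by
  obtain ⟨R, hR, hcov⟩ := hB
  obtain ⟨r₀, hr₀, hp₀r₀⟩ := hcov p₀ hp₀
  refine ⟨R.erase r₀, by rw [Finset.card_erase_of_mem hr₀]; omega, fun p hp => ?_⟩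
  obtain ⟨q, hq, hpq⟩ := hAB p hp
  obtain ⟨r, hr, hqr⟩ := hcov q hq
  refine ⟨r, Finset.mem_erase.2 ⟨?_, hr⟩, pairEquiv_trans hpq hqr⟩
  rintro rfl
  exact havoid p hp (pairEquiv_trans (pairEquiv_trans hpq hqr) (pairEquiv_symm hp₀r₀))

lemma quotCardLE_empty (k : ℕ) : quotCardLE (∅ : GCT Var Val) k :=
  ⟨∅, Nat.zero_le k, by simp⟩

lemma quotCardLE_zero_iff {S : GCT Var Val} : quotCardLE S 0 ↔ S = ∅ := by
  refine ⟨fun ⟨R, hR, hcov⟩ => ?_, fun h => h ▸ quotCardLE_empty 0⟩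
  rw [Nat.le_zero, Finset.card_eq_zero] at hR
  subst hR
  exact Set.eq_empty_of_forall_notMem fun p hp => by simpa using hcov p hp

lemma quotCardLE_one_iff {S : GCT Var Val} :
    quotCardLE S 1 ↔ ∀ p ∈ S, ∀ q ∈ S, pairEquiv p q := by
  constructor
  · rintro ⟨R, hR, hcov⟩ p hp q hq
    obtain ⟨r, hr, hpr⟩ := hcov p hp
    obtain ⟨r', hr', hqr'⟩ := hcov q hq
    obtain rfl := Finset.card_le_one.1 hR r hr r' hr'
    exact pairEquiv_trans hpr (pairEquiv_symm hqr')
  · intro h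
    obtain rfl | ⟨p, hp⟩ := S.eq_empty_or_nonempty
    · exact quotCardLE_empty 1
    · exact ⟨{p}, le_rfl, fun q hq => ⟨p, Finset.mem_singleton_self p, h q hq p hp⟩⟩

lemma quotCardLE_union {S₁ S₂ : GCT Var Val} {a b : ℕ}
    (h₁ : quotCardLE S₁ a) (h₂ : quotCardLE S₂ b) : quotCardLE (S₁ ∪ S₂) (a + b) := by
  obtain ⟨R₁, hR₁, hcov₁⟩ := h₁
  obtain ⟨R₂, hR₂, hcov₂⟩ := h₂
  refine ⟨R₁ ∪ R₂, (Finset.card_union_le _ _).trans (by omega), ?_⟩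
  rintro p (hp | hp)
  · obtain ⟨q, hq, hpq⟩ := hcov₁ p hp
    exact ⟨q, Finset.mem_union_left _ hq, hpq⟩
  · obtain ⟨q, hq, hpq⟩ := hcov₂ p hp
    exact ⟨q, Finset.mem_union_right _ hq, hpq⟩

lemma quotCardLE_add_one_iff {S : GCT Var Val} {k : ℕ} :
    quotCardLE S (k + 1) ↔
      ∃ S₁ S₂ : GCT Var Val, S₁ ∪ S₂ = S ∧ quotCardLE S₁ 1 ∧ quotCardLE S₂ k := by
  constructor
  · intro h
    obtain rfl | ⟨p, hp⟩ := S.eq_empty_or_nonempty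
    · exact ⟨∅, ∅, Set.union_empty _, quotCardLE_empty 1, quotCardLE_empty k⟩
    refine ⟨{q ∈ S | pairEquiv q p}, {q ∈ S | ¬ pairEquiv q p}, ?_, ?_,
      h.of_avoid hp (fun q hq => ⟨q, hq.1, pairEquiv_refl q⟩) fun q hq => hq.2⟩
    · exact Set.ext fun q => by by_cases hq : pairEquiv q p <;> simp [hq]
    · exact quotCardLE_one_iff.2 fun q hq r hr => pairEquiv_trans hq.2 (pairEquiv_symm hr.2)
  · rintro ⟨S₁, S₂, rfl, h₁, h₂⟩
    simpa only [add_comm] using quotCardLE_union h₁ h₂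

end QuotCard

section Intervention
variable [DecidableEq Var] [Fintype Var]

lemma interveneAssign_erase_self (F : FuncSystem Var Val) (x s : Assign Var Val) (V : Var) :
    interveneAssign F (Finset.univ.erase V) x s V = if V ∈ F.En then F.fn V x else s V := by
  split_ifs with hV
  · -- After one step every variable but `V` carries its imposed value, so the next step
    -- computes `F.fn V x`.
    have hstep : ∀ t W, W ≠ V → stepFn F (Finset.univ.erase V) x t W = x W := by
      intro t W hW
      simp [stepFn, hW]
    obtain ⟨n, hn⟩ := Nat.exists_eq_add_of_lt (Fintype.card_pos_iff.2 ⟨V⟩)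
    rw [interveneAssign, hn, Function.iterate_succ_apply', Function.iterate_succ_apply']
    simp only [stepFn, Finset.mem_erase, ne_eq, not_true_eq_false, false_and, if_false, hV,
      if_true]
    exact F.dep_only V _ _ fun W hW => hstep _ W fun h => F.pa_ne V (h ▸ hW)
  · rw [interveneAssign]
    induction Fintype.card Var + 1 with
    | zero => rfl
    | succ n ih => simp [Function.iterate_succ_apply', stepFn, hV, ih]

lemma interveneAssign_erase_self_of_notMem {F : FuncSystem Var Val} {s : Assign Var Val}
    (hs : Compat s F) (x : Assign Var Val) {V : Var} (hV : V ∉ F.En \ Cn F) :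
    interveneAssign F (Finset.univ.erase V) x s V = s V := by
  rw [interveneAssign_erase_self]
  split_ifs with hEn
  · have hCn : V ∈ Cn F := by_contra fun h => hV ⟨hEn, h⟩
    rw [hCn.2 x s, hs V hEn]
  · rfl

lemma en_diff_cn_subset_of_intervene_eq {s : Assign Var Val} {F G : FuncSystem Var Val}
    (hG : Compat s G)
    (h : ∀ V w, interveneAssign F (Finset.univ.erase V) w s V =
      interveneAssign G (Finset.univ.erase V) w s V) :
    F.En \ Cn F ⊆ G.En \ Cn G := by
  intro V hV
  by_contra hVG
  have hconst : ∀ w, F.fn V w = s V := fun w => by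
    simpa [interveneAssign_erase_self, hV.1,
      interveneAssign_erase_self_of_notMem hG w hVG] using h V w
  exact hV.2 ⟨hV.1, fun a b => (hconst a).trans (hconst b).symm⟩

lemma sysEquiv_iff_intervene_eq {s : Assign Var Val} {F G : FuncSystem Var Val}
    (hF : Compat s F) (hG : Compat s G) :
    sysEquiv F G ↔ ∀ V w, interveneAssign F (Finset.univ.erase V) w s V =
      interveneAssign G (Finset.univ.erase V) w s V := by
  constructor
  · intro hFG V w
    by_cases hV : V ∈ F.En \ Cn F
    · have hVG : V ∈ G.En \ Cn G := hFG.1 ▸ hV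
      simpa [interveneAssign_erase_self, hV.1, hVG.1] using
        hFG.2 V hV w w fun _ _ _ => rfl
    · rw [interveneAssign_erase_self_of_notMem hF w hV,
        interveneAssign_erase_self_of_notMem hG w (hFG.1 ▸ hV)]
  · intro h
    have hEq : F.En \ Cn F = G.En \ Cn G :=
      (en_diff_cn_subset_of_intervene_eq hG h).antisymm
        (en_diff_cn_subset_of_intervene_eq hF fun V w => (h V w).symm)
    refine ⟨hEq, fun V hV a b hab => ?_⟩
    have hVG : V ∈ G.En \ Cn G := hEq ▸ hV
    let w : Assign Var Val := fun W => if W ∈ F.PA V then a W else b W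
    calc F.fn V a = F.fn V w := F.dep_only V a w fun W hW => by simp [w, hW]
      _ = G.fn V w := by simpa [interveneAssign_erase_self, hV.1, hVG.1] using h V w
      _ = G.fn V b := G.dep_only V w b fun W hW => by
          by_cases hWF : W ∈ F.PA V
          · simp [w, hWF, hab W hWF hW]
          · simp [w, hWF]

end Intervention

lemma IsGCT.mono {S A : GCT Var Val} (hS : IsGCT S) (h : A ⊆ S) : IsGCT A :=
  fun p hp => hS p (h hp)

section Semantics
variable [DecidableEq Var] [Fintype Var] [Nonempty Var] [∀ V, Nonempty (Val V)]

lemma gsat_falsum_iff {T : GCT Var Val} : gsat T falsum ↔ T = ∅ := by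
  simp only [falsum, gsat]
  refine ⟨fun ⟨hpos, hneg⟩ => Set.eq_empty_of_forall_notMem fun p hp => ?_, ?_⟩
  · exact hneg p hp fun q hq => (Set.mem_singleton_iff.1 hq) ▸ hpos p hp
  · rintro rfl
    simp

lemma gsat_bigAnd_iff {T : GCT Var Val} {l : List (Formula Var Val)} :
    gsat T (bigAnd l) ↔ ∀ φ ∈ l, gsat T φ := by
  induction l with
  | nil =>
    simp only [bigAnd, gsat, List.not_mem_nil, IsEmpty.forall_iff, implies_true, iff_true]
    exact fun p _ h => Set.singleton_ne_empty p (gsat_falsum_iff.1 h)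
  | cons φ l ih =>
    cases l with
    | nil => simp [bigAnd]
    | cons ψ l =>
      show gsat T (.and φ (bigAnd (ψ :: l))) ↔ _
      rw [gsat, ih]
      exact List.forall_mem_cons.symm

lemma gsat_bigOr_map_iff {ι : Type*} {S : GCT Var Val} (L : List ι)
    (g : ι → Formula Var Val) (P : ι → Assign Var Val × FuncSystem Var Val → Prop)
    (hg : ∀ a ∈ L, ∀ U ⊆ S, gsat U (g a) ↔ ∀ q ∈ U, P a q) :
    gsat S (bigOr (L.map g)) ↔ ∀ q ∈ S, ∃ a ∈ L, P a q := by
  induction L generalizing S with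
  | nil => simp [bigOr, gsat_falsum_iff, Set.eq_empty_iff_forall_notMem]
  | cons a L ih =>
    cases L with
    | nil => simpa [bigOr] using hg a (by simp) S subset_rfl
    | cons b L =>
      show gsat S (.or (g a) (bigOr ((b :: L).map g))) ↔ _
      constructor
      · rintro ⟨S₁, S₂, rfl, h₁, h₂⟩ q (hq | hq)
        · exact ⟨a, by simp, (hg a (by simp) S₁ Set.subset_union_left).1 h₁ q hq⟩
        · obtain ⟨c, hc, hPc⟩ := (ih fun c hc U hU =>
            hg c (by simp [hc]) U (hU.trans Set.subset_union_right)).1 h₂ q hq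
          exact ⟨c, by simp [hc], hPc⟩
      · intro h
        refine ⟨{q ∈ S | P a q}, {q ∈ S | ∃ c ∈ b :: L, P c q}, ?_,
          (hg a (by simp) _ (Set.sep_subset _ _)).2 fun q hq => hq.2,
          (ih fun c hc U hU => hg c (by simp [hc]) U (hU.trans (Set.sep_subset _ _))).2
            fun q hq => hq.2⟩
        ext q
        constructor
        · rintro (hq | hq) <;> exact hq.1
        · intro hq
          obtain ⟨c, hc, hPc⟩ := h q hq
          rcases List.mem_cons.1 hc with rfl | hc
          · exact Or.inl ⟨hq, hPc⟩
          · exact Or.inr ⟨hq, c, hc, hPc⟩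

lemma gsat_eqConj_iff {T : GCT Var Val} {s : Assign Var Val} :
    gsat T (eqConj s) ↔ ∀ p ∈ T, p.1 = s := by
  simp only [eqConj, gsat_bigAnd_iff, List.forall_mem_map, Finset.mem_toList,
    Finset.mem_univ, true_implies, gsat]
  exact ⟨fun h p hp => funext fun V => h V p hp, fun h V p hp => by rw [h p hp]⟩

lemma gsat_Theta_iff {T : GCT Var Val} {A : Finset (Assign Var Val)} :
    gsat T (Theta A) ↔ ∀ p ∈ T, p.1 ∈ A := by
  rw [Theta, gsat_bigOr_map_iff A.toList eqConj (fun s p => p.1 = s)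
    fun s _ U _ => gsat_eqConj_iff]
  simp

lemma gsat_bigOr_Theta_and_iff {Phi : FuncSystem Var Val → Formula Var Val}
    (hPhi : ∀ F R, IsGCT R → (gsat R (Phi F) ↔ ∀ p ∈ R, sysEquiv p.2 F))
    (L : List (Assign Var Val × FuncSystem Var Val)) {S : GCT Var Val} (hS : IsGCT S) :
    gsat S (bigOr (L.map fun p => .and (Theta {p.1}) (Phi p.2))) ↔
      ∀ q ∈ S, ∃ p ∈ L, pairEquiv q p := by
  refine gsat_bigOr_map_iff L _ (fun p q => pairEquiv q p) fun p _ U hU => ?_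
  rw [gsat, gsat_Theta_iff, hPhi p.2 U (hS.mono hU)]
  simp only [Finset.mem_singleton, pairEquiv]
  exact ⟨fun h q hq => ⟨h.1 q hq, h.2 q hq⟩, fun h => ⟨fun q hq => (h q hq).1,
    fun q hq => (h q hq).2⟩⟩

lemma gsat_bigAnd_conAtom_iff {S : GCT Var Val} :
    gsat S (bigAnd ((Finset.univ : Finset Var).toList.map conAtom)) ↔
      ∀ p ∈ S, ∀ q ∈ S, p.1 = q.1 := by
  simp only [gsat_bigAnd_iff, List.forall_mem_map, Finset.mem_toList, Finset.mem_univ,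
    true_implies, conAtom, gsat, List.not_mem_nil, IsEmpty.forall_iff, implies_true]
  exact ⟨fun h p hp q hq => funext fun V => h V p hp q hq,
    fun h V p hp q hq => by rw [h p hp q hq]⟩

variable [∀ V, Fintype (Val V)]

lemma gsat_muForm_iff {S : GCT Var Val} :
    gsat S muForm ↔ ∀ V w, ∀ p ∈ S, ∀ q ∈ S,
      interveneAssign p.2 (Finset.univ.erase V) w p.1 V =
        interveneAssign q.2 (Finset.univ.erase V) w q.1 V := by
  simp only [muForm, gsat_bigAnd_iff, List.forall_mem_map, Finset.mem_toList, Finset.mem_univ,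
    true_implies, conAtom, gsat, gIntervene, Set.forall_mem_image, List.not_mem_nil,
    IsEmpty.forall_iff, implies_true]

lemma gsat_chiForm_iff {S : GCT Var Val} (hS : IsGCT S) :
    gsat S chiForm ↔ quotCardLE S 1 := by
  rw [quotCardLE_one_iff, chiForm, gsat, gsat_muForm_iff, gsat_bigAnd_conAtom_iff]
  constructor
  · rintro ⟨hmu, hsame⟩ p hp q hq
    have hpq : p.1 = q.1 := hsame p hp q hq
    refine ⟨hpq, (sysEquiv_iff_intervene_eq (hS p hp).1 (hpq ▸ (hS q hq).1)).2 fun V w => ?_⟩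
    simpa [hpq] using hmu V w p hp q hq
  · intro h
    refine ⟨fun V w p hp q hq => ?_, fun p hp q hq => (h p hp q hq).1⟩
    obtain ⟨hpq, hFG⟩ := h p hp q hq
    rw [(sysEquiv_iff_intervene_eq (hS p hp).1 (hpq ▸ (hS q hq).1)).1 hFG V w, hpq]

lemma gsat_chiK_iff {S : GCT Var Val} {k : ℕ} (hS : IsGCT S) :
    gsat S (chiK k) ↔ quotCardLE S k := by
  induction k generalizing S with
  | zero => rw [chiK, gsat_falsum_iff, quotCardLE_zero_iff]
  | succ n ih =>
    cases n with
    | zero => exact gsat_chiForm_iff hS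
    | succ m =>
      rw [chiK, gsat, quotCardLE_add_one_iff]
      refine exists₂_congr fun S₁ S₂ => ?_
      constructor
      · rintro ⟨rfl, h₁, h₂⟩
        exact ⟨rfl, (gsat_chiForm_iff (hS.mono Set.subset_union_left)).1 h₁,
          (ih (hS.mono Set.subset_union_right)).1 h₂⟩
      · rintro ⟨rfl, h₁, h₂⟩
        exact ⟨rfl, (gsat_chiForm_iff (hS.mono Set.subset_union_left)).2 h₁,
          (ih (hS.mono Set.subset_union_right)).2 h₂⟩

end Semantics

section Predecessors

lemma not_sle_iff_exists_union {T S : GCT Var Val} {k : ℕ} (hle : quotCardLE T (k + 1))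
    (hnle : ¬ quotCardLE T k) :
    ¬ sle T S ↔ ∃ S₁ S₂ S₃ : GCT Var Val, S₁ ∪ (S₂ ∪ S₃) = S ∧ quotCardLE S₁ k ∧
      (∀ q ∈ S₂, q.1 ∉ teamOf T) ∧ ∀ q ∈ S₃, q.1 ∈ teamOf T ∧ ¬ ∃ p ∈ T, pairEquiv q p := by
  rw [sle_iff_forall_exists_pairEquiv]
  constructor
  · intro hTS
    obtain ⟨p₀, hp₀, hp₀S⟩ : ∃ p₀ ∈ T, ∀ q ∈ S, ¬ pairEquiv p₀ q := by simpa using hTS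
    refine ⟨{q ∈ S | ∃ p ∈ T, pairEquiv q p}, {q ∈ S | q.1 ∉ teamOf T},
      {q ∈ S | q.1 ∈ teamOf T ∧ ¬ ∃ p ∈ T, pairEquiv q p}, ?_,
      hle.of_avoid hp₀ (fun q hq => hq.2) fun q hq hqp₀ => hp₀S q hq.1 (pairEquiv_symm hqp₀),
      fun q hq => hq.2, fun q hq => hq.2⟩
    ext q
    simp only [Set.mem_union, Set.mem_sep_iff]
    tauto
  · rintro ⟨S₁, S₂, S₃, rfl, h₁, h₂, h₃⟩ hTS
    refine hnle (h₁.of_forall_exists fun p hp => ?_)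
    obtain ⟨q, hq₁ | hq₂ | hq₃, hpq⟩ := hTS p hp
    · exact ⟨q, hq₁, hpq⟩
    · exact absurd ⟨p, hp, hpq.1⟩ (h₂ q hq₂)
    · exact absurd ⟨p, hp, pairEquiv_symm hpq⟩ (h₃ q hq₃).2

end Predecessors

theorem xi_defines_non_predecessors_general {Var : Type} [Fintype Var] [DecidableEq Var] [Nonempty Var]
    {Val : Var → Type} [∀ V, Fintype (Val V)] [∀ V, Nonempty (Val V)]
    (T : GCT Var Val) (k : ℕ)
    (hcard : quotCardLE T (k + 1) ∧ ¬ quotCardLE T k)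
    (Phi : FuncSystem Var Val → Formula Var Val)
    (hPhi : ∀ (F : FuncSystem Var Val) (R : GCT Var Val), IsGCT R →
        (gsat R (Phi F) ↔ ∀ p ∈ R, sysEquiv p.2 F))
    (L : List (Assign Var Val × FuncSystem Var Val))
    (hL : ∀ p : Assign Var Val × FuncSystem Var Val,
        p ∈ L ↔ (p.1 ∈ teamOf T ∧ ¬ sle ({p} : GCT Var Val) T)) :
    ∀ S : GCT Var Val, IsGCT S →
      (gsat S (Formula.or (chiK k)
          (Formula.or (Theta (Set.toFinite (teamOf T)ᶜ).toFinset)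
            (bigOr (L.map fun p =>
              Formula.and (Theta ({p.1} : Finset (Assign Var Val))) (Phi p.2))))) ↔
        ¬ sle T S) := by
  simp only [singleton_sle_iff] at hL
  intro S hS
  rw [not_sle_iff_exists_union hcard.1 hcard.2]
  constructor
  · rintro ⟨S₁, S₂₃, rfl, hχ, S₂, S₃, rfl, hΘ, hΞ⟩
    refine ⟨S₁, S₂, S₃, rfl, (gsat_chiK_iff (hS.mono Set.subset_union_left)).1 hχ,
      fun q hq => by simpa using gsat_Theta_iff.1 hΘ q hq, fun q hq => ?_⟩
    obtain ⟨r, hrL, hqr⟩ := (gsat_bigOr_Theta_and_iff hPhi L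
      (hS.mono (Set.subset_union_right.trans Set.subset_union_right))).1 hΞ q hq
    obtain ⟨hr, hrT⟩ := (hL r).1 hrL
    exact ⟨hqr.1 ▸ hr, fun ⟨p, hp, hqp⟩ => hrT ⟨p, hp, pairEquiv_trans (pairEquiv_symm hqr) hqp⟩⟩
  · rintro ⟨S₁, S₂, S₃, rfl, h₁, h₂, h₃⟩
    refine ⟨S₁, S₂ ∪ S₃, rfl, (gsat_chiK_iff (hS.mono Set.subset_union_left)).2 h₁, S₂, S₃, rfl,
      gsat_Theta_iff.2 fun q hq => by simpa using h₂ q hq, ?_⟩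
    rw [gsat_bigOr_Theta_and_iff hPhi L
      (hS.mono (Set.subset_union_right.trans Set.subset_union_right))]
    exact fun q hq => ⟨q, (hL q).2 (h₃ q hq), pairEquiv_refl q⟩

/-- the formula Ξ^T := χ_k ∨ Θ^(complement of T⁻) ∨ the tensor disjunction
of Θ^({s}) ∧ Φ^F over the pairs (s,F) with s ∈ T⁻ and {(s,F)} not ≼ T, defines the
complement of the set of ≼-predecessors of T: a generalized causal team S satisfies Ξ^T
iff T is not ≼ S (where T is nonempty with |T/≈| = k+1, Φ^F is the CO-formula
characterizing the function components similar to F, and L enumerates the pairs of the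
big disjunction). -/
theorem xi_defines_non_predecessors {Var : Type} [Fintype Var] [DecidableEq Var] [Nonempty Var]
    {Val : Var → Type} [∀ V, Fintype (Val V)] [∀ V, Nonempty (Val V)]
    (T : GCT Var Val) (hT : IsGCT T) (hTne : T.Nonempty) (k : ℕ)
    (hcard : quotCardLE T (k + 1) ∧ ¬ quotCardLE T k)
    (Phi : FuncSystem Var Val → Formula Var Val)
    (hPhiCO : ∀ F, IsCO (Phi F))
    (hPhi : ∀ (F : FuncSystem Var Val) (R : GCT Var Val), IsGCT R →
        (gsat R (Phi F) ↔ ∀ p ∈ R, sysEquiv p.2 F))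
    (L : List (Assign Var Val × FuncSystem Var Val))
    (hL : ∀ p : Assign Var Val × FuncSystem Var Val,
        p ∈ L ↔ (p.1 ∈ teamOf T ∧ ¬ sle ({p} : GCT Var Val) T)) :
    ∀ S : GCT Var Val, IsGCT S →
      (gsat S (Formula.or (chiK k)
          (Formula.or (Theta (Set.toFinite (teamOf T)ᶜ).toFinset)
            (bigOr (L.map fun p =>
              Formula.and (Theta ({p.1} : Finset (Assign Var Val))) (Phi p.2))))) ↔
        ¬ sle T S) :=
  xi_defines_non_predecessors_general T k hcard Phi hPhi L hL

end CausalTeams
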